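/- Let M > 0, μ > 0, m be a nonzero integer, l an integer with l ≥ |m|, and n a natural number. Set α := m/(μM) and β := 6 − l(l+1)/(μ²M²), and assume 4 < α² < 6 and 4/100 < β < 165/100. Then there exists a₀ ∈ (0, M) such that for every a ∈ (a₀, M), the polynomial p has a root in U_1(0) ∩ {w ∈ ℂ : Im w < 0}. -/

import Mathlib

/-!
At `a = M` the square roots vanish and `p` becomes the real quartic
`q(w) = w⁴ + αw³ + (β - 4)w² - αw + 3`. For `α > 2`, `q` has two real roots `s < r < -1` with
`rs > 3` (the second one is found through `w⁴ q(3/w) = 9 q(w) - 6(w² - 3)(w² + 2αw + 3)`), so its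
two remaining roots have product `3/(rs) ∈ (0, 1)`. They cannot be real, because `q > 0` on
`[-1, 1]`; hence they are complex conjugate of modulus `< 1`. The case `α < -2` follows by
`w ↦ -w̄`. Finally `p(a, ·)` is monic of degree 4 and `p(a, z) → q(z)` as `a → M`, and
`|P(z)| = ∏ |z - rᵢ|` forces a monic polynomial to have a root near any point where it is small.
-/

noncomputable def p (M a μ : ℝ) (m l : ℤ) (n : ℕ) (w : ℂ) : ℂ :=
  w ^ 4
    + (((m * a / M : ℝ) : ℂ) - Complex.I * (((2 * n + 1 : ℝ) * Real.sqrt (1 - a ^ 2 / M ^ 2) : ℝ) : ℂ))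
        / ((μ * M : ℝ) : ℂ) * (w * (w ^ 2 - 1))
    + (((2 - (l * (l + 1) : ℤ) / (μ ^ 2 * M ^ 2) : ℝ)) : ℂ) * w ^ 2
    + 3 + ((2 * Real.sqrt (1 - a ^ 2 / M ^ 2) : ℝ) : ℂ)

open Polynomial Filter Topology
open scoped NNReal

namespace Polynomial

variable {K : Type*} [NormedField K] [IsAlgClosed K]

theorem exists_isRoot_dist_lt {P : K[X]} (hP : P.Monic) {z : K} {ε : ℝ} (hε : 0 ≤ ε)
    (h : ‖P.eval z‖ < ε ^ P.natDegree) : ∃ r, P.IsRoot r ∧ dist r z < ε := by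
  lift ε to ℝ≥0 using hε
  by_contra! hfar
  have hsplit := IsAlgClosed.splits P
  refine h.not_ge ?_
  rw [← coe_nnnorm, ← NNReal.coe_pow, NNReal.coe_le_coe, hsplit.eval_eq_prod_roots_of_monic hP,
    ← nnnormHom_apply, map_multiset_prod, Multiset.map_map, hsplit.natDegree_eq_card_roots,
    ← Multiset.card_map (nnnormHom ∘ (z - ·))]
  refine Multiset.pow_card_le_prod fun x hx => ?_
  obtain ⟨r, hr, rfl⟩ := Multiset.mem_map.mp hx
  rw [← NNReal.coe_le_coe]
  simpa [dist_comm, dist_eq_norm] using hfar r (isRoot_of_mem_roots hr)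

theorem eventually_exists_isRoot_mem {ι : Type*} {l : Filter ι} {P : ι → K[X]} {d : ℕ}
    (hP : ∀ i, (P i).Monic) (hd : ∀ i, (P i).natDegree = d) {z : K}
    (hz : Tendsto (fun i => (P i).eval z) l (𝓝 0)) {U : Set K} (hU : U ∈ 𝓝 z) :
    ∀ᶠ i in l, ∃ r ∈ U, (P i).IsRoot r := by
  obtain ⟨ε, hε, hball⟩ := Metric.mem_nhds_iff.mp hU
  have hεd : ‖(0 : K)‖ < ε ^ d := by rw [norm_zero]; positivity
  filter_upwards [hz.norm.eventually_lt_const hεd] with i hi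
  obtain ⟨r, hr, hdist⟩ := exists_isRoot_dist_lt (hP i) hε.le (hd i ▸ hi)
  exact ⟨r, hball hdist, hr⟩

end Polynomial

theorem exists_quadratic_root_norm_lt_one_im_neg {b c : ℝ} (hc : |c| < 1)
    (hb : ∀ x : ℝ, |x| < 1 → x ^ 2 + b * x + c ≠ 0) :
    ∃ z : ℂ, ‖z‖ < 1 ∧ z.im < 0 ∧ z ^ 2 + b * z + c = 0 := by
  by_cases hdisc : 4 * c ≤ b ^ 2
  · exfalso
    set e := √(b ^ 2 - 4 * c)
    have he : e ^ 2 = b ^ 2 - 4 * c := Real.sq_sqrt (by linarith)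
    have hprod : |(-b + e) / 2| * |(-b - e) / 2| = |c| := by
      rw [← abs_mul]; congr 1; linear_combination -he / 4
    rcases lt_or_ge |(-b + e) / 2| 1 with h | h
    · exact hb _ h (by linear_combination he / 4)
    · refine hb ((-b - e) / 2) ?_ (by linear_combination he / 4)
      by_contra! h'
      nlinarith [mul_le_mul h h' zero_le_one (abs_nonneg _), hprod]
  · push Not at hdisc
    set d := √(4 * c - b ^ 2)
    have hd : d ^ 2 = 4 * c - b ^ 2 := Real.sq_sqrt (by linarith)
    have hd0 : 0 < d := Real.sqrt_pos.mpr (by linarith)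
    refine ⟨⟨-b / 2, -d / 2⟩, ?_, (by linarith : -d / 2 < 0), ?_⟩
    · rw [← sq_lt_one_iff₀ (norm_nonneg _), Complex.sq_norm, Complex.normSq_mk]
      nlinarith [abs_lt.mp hc]
    · apply Complex.ext
      · simp only [sq, Complex.add_re, Complex.mul_re, Complex.ofReal_re, Complex.ofReal_im,
          zero_mul, sub_zero, Complex.zero_re]
        linear_combination -hd / 4
      · simp only [sq, Complex.add_im, Complex.mul_im, Complex.ofReal_re, Complex.ofReal_im,
          zero_mul, add_zero, Complex.zero_im]
        ring

def limitQuartic {R : Type*} [CommRing R] (α β w : R) : R :=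
  w ^ 4 + α * w ^ 3 + (β - 4) * w ^ 2 - α * w + 3

section limitQuartic

variable {R : Type*} [CommRing R]

theorem map_limitQuartic {S : Type*} [CommRing S] (f : R →+* S) (α β w : R) :
    f (limitQuartic α β w) = limitQuartic (f α) (f β) (f w) := by
  simp [limitQuartic, map_ofNat f]

theorem limitQuartic_zero (α β : R) : limitQuartic α β 0 = 3 := by
  simp [limitQuartic]

theorem limitQuartic_eq_mul_sq_add (α β w : R) :
    limitQuartic α β w = β * w ^ 2 + (1 - w ^ 2) * (3 - w ^ 2 - α * w) := by
  unfold limitQuartic; ring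

theorem limitQuartic_eq_mul_quadratic [IsDomain R] {α β r s : R}
    (hr : limitQuartic α β r = 0) (hs : limitQuartic α β s = 0) (hrs : r ≠ s) (w : R) :
    limitQuartic α β w = (w - r) * (w - s) *
      (w ^ 2 + (α + r + s) * w + (β - 4 + (α + r + s) * (r + s) - r * s)) := by
  unfold limitQuartic at hr hs ⊢
  -- The remainder of the division by `(w - r) * (w - s)` is linear and vanishes at `r ≠ s`.
  have hlin : (α + r + s) * (r * s) - (β - 4 + (α + r + s) * (r + s) - r * s) * (r + s) + α = 0 :=
    (mul_eq_zero.mp (by linear_combination hs - hr)).resolve_right (sub_ne_zero.mpr hrs)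
  have hconst : (β - 4 + (α + r + s) * (r + s) - r * s) * (r * s) = 3 := by
    linear_combination -hr - r * hlin
  linear_combination (-w) * hlin - hconst

theorem limitQuartic_three_div {K : Type*} [Field K] (α β : K) {w : K} (hw : w ≠ 0) :
    w ^ 4 * limitQuartic α β (3 / w)
      = 9 * limitQuartic α β w - 6 * (w ^ 2 - 3) * (w ^ 2 + 2 * α * w + 3) := by
  unfold limitQuartic; field_simp; ring

end limitQuartic

theorem continuous_limitQuartic (α β : ℝ) : Continuous (limitQuartic α β) := by
  unfold limitQuartic; fun_prop

theorem limitQuartic_pos {α β w : ℝ} (hα : 0 ≤ α) (hα6 : α ^ 2 < 6) (hβ : 4 / 100 < β)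
    (hw : |w| ≤ 1) : 0 < limitQuartic α β w := by
  rw [limitQuartic_eq_mul_sq_add]
  obtain ⟨hw₁, hw₂⟩ := abs_le.mp hw
  have h1w : 0 ≤ 1 - w ^ 2 := by nlinarith
  rcases le_or_gt w 0 with hw0 | hw0
  · rcases hw0.lt_or_eq with hw0 | rfl
    · have : 0 ≤ (1 - w ^ 2) * (3 - w ^ 2 - α * w) := mul_nonneg h1w (by nlinarith)
      nlinarith [mul_pos (by linarith : 0 < β) (pow_pos (neg_pos.mpr hw0) 2)]
    · norm_num
  · have hα49 : α < 49 / 20 := by nlinarith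
    have hG : (1 - w ^ 2) * (w ^ 2 + 49 / 20 * w - 3) ≤ w ^ 2 / 25 := by
      rcases le_or_gt w (4 / 5) with h45 | h45
      · nlinarith [mul_nonneg h1w (by nlinarith : (0 : ℝ) ≤ 3 - w ^ 2 - 49 / 20 * w)]
      · nlinarith [sq_nonneg (761 / 810 - w),
          mul_nonneg (sq_nonneg (1 - w)) (by linarith : (0 : ℝ) ≤ w - 4 / 5),
          sq_nonneg ((1 - w) ^ 2)]
    nlinarith [mul_nonneg (mul_nonneg h1w hw0.le) (by linarith : (0 : ℝ) ≤ 49 / 20 - α),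
      mul_pos (by linarith : (0 : ℝ) < β - 4 / 100) (pow_pos hw0 2)]

theorem exists_roots_limitQuartic {α β : ℝ} (hα : 2 < α) (hα6 : α ^ 2 < 6) (hβ₀ : 0 < β)
    (hβ : β < 165 / 100) :
    ∃ r s : ℝ, limitQuartic α β r = 0 ∧ limitQuartic α β s = 0 ∧ s < r ∧ 3 < r * s := by
  have hcont := continuous_limitQuartic α β
  -- `-17/10` lies in `(-√3, -1)`, so the root `r` found below satisfies `r² < 3`.
  have hneg : limitQuartic α β (-17 / 10) < 0 := by unfold limitQuartic; nlinarith
  have hpos : 0 < limitQuartic α β (-1) := by unfold limitQuartic; linarith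
  obtain ⟨r, ⟨hr₁, hr₂⟩, hr⟩ := intermediate_value_Ioo (by norm_num) hcont.continuousOn ⟨hneg, hpos⟩
  have hr0 : r ≠ 0 := by linarith
  have hneg' : limitQuartic α β (3 / r) < 0 := by
    have h := limitQuartic_three_div α β hr0
    rw [hr, mul_zero, zero_sub] at h
    have : 0 < (r ^ 2 - 3) * (r ^ 2 + 2 * α * r + 3) :=
      mul_pos_of_neg_of_neg (by nlinarith) (by nlinarith)
    nlinarith [pow_pos (neg_pos.mpr (by linarith : r < 0)) 4]
  have hpos' : 0 < limitQuartic α β (-10) := by unfold limitQuartic; nlinarith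
  have h3r : 3 / r < r := by rw [div_lt_iff_of_neg (by linarith)]; nlinarith
  obtain ⟨s, ⟨hs₁, hs₂⟩, hs⟩ := intermediate_value_Ioo'
    (by rw [le_div_iff_of_neg (by linarith)]; linarith) hcont.continuousOn ⟨hneg', hpos'⟩
  refine ⟨r, s, hr, hs, hs₂.trans h3r, ?_⟩
  calc 3 = r * (3 / r) := by field_simp
    _ < r * s := mul_lt_mul_of_neg_left hs₂ (by linarith)

theorem exists_root_limitQuartic_of_two_lt {α β : ℝ} (hα : 2 < α) (hα6 : α ^ 2 < 6)
    (hβ₁ : 4 / 100 < β) (hβ₂ : β < 165 / 100) :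
    ∃ z : ℂ, ‖z‖ < 1 ∧ z.im < 0 ∧ limitQuartic (α : ℂ) β z = 0 := by
  obtain ⟨r, s, hr, hs, hsr, hrs⟩ := exists_roots_limitQuartic hα hα6 (by linarith) hβ₂
  have hfac := limitQuartic_eq_mul_quadratic hr hs hsr.ne'
  set b := α + r + s
  set c := β - 4 + b * (r + s) - r * s
  have hc : c * (r * s) = 3 := by
    have h0 := hfac 0
    rw [limitQuartic_zero] at h0
    linear_combination -h0
  have hc1 : |c| < 1 := by rw [abs_lt]; constructor <;> nlinarith
  obtain ⟨z, hz, hzim, hzq⟩ := exists_quadratic_root_norm_lt_one_im_neg (b := b) hc1 fun x hx hx0 =>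
    (limitQuartic_pos (by linarith) hα6 hβ₁ hx.le).ne' (by rw [hfac x, hx0, mul_zero])
  refine ⟨z, hz, hzim, ?_⟩
  have hr' := congrArg Complex.ofRealHom hr
  have hs' := congrArg Complex.ofRealHom hs
  simp only [map_limitQuartic, Complex.ofRealHom_eq_coe, map_zero] at hr' hs'
  rw [limitQuartic_eq_mul_quadratic hr' hs' (by exact_mod_cast hsr.ne')]
  simp only [b, c] at hzq
  push_cast at hzq
  linear_combination (z - r) * (z - s) * hzq

theorem limitQuartic_neg_conj (α β : ℝ) (z : ℂ) :
    limitQuartic (α : ℂ) β (-(starRingEnd ℂ) z)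
      = starRingEnd ℂ (limitQuartic ((-α : ℝ) : ℂ) β z) := by
  rw [map_limitQuartic]
  simp only [Complex.conj_ofReal]
  unfold limitQuartic; push_cast; ring

theorem exists_root_limitQuartic {α β : ℝ} (hα : 4 < α ^ 2) (hα6 : α ^ 2 < 6)
    (hβ₁ : 4 / 100 < β) (hβ₂ : β < 165 / 100) :
    ∃ z : ℂ, ‖z‖ < 1 ∧ z.im < 0 ∧ limitQuartic (α : ℂ) β z = 0 := by
  rcases le_or_gt 0 α with h | h
  · exact exists_root_limitQuartic_of_two_lt (by nlinarith) hα6 hβ₁ hβ₂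
  · obtain ⟨z, hz, hzim, hzq⟩ :=
      exists_root_limitQuartic_of_two_lt (α := -α) (by nlinarith) (by simpa) hβ₁ hβ₂
    exact ⟨-(starRingEnd ℂ) z, by simpa, by simpa, by rw [limitQuartic_neg_conj, hzq, map_zero]⟩

noncomputable def pPolynomial (M a μ : ℝ) (m l : ℤ) (n : ℕ) : ℂ[X] :=
  X ^ 4
    + C ((((m * a / M : ℝ) : ℂ)
        - Complex.I * (((2 * n + 1 : ℝ) * Real.sqrt (1 - a ^ 2 / M ^ 2) : ℝ) : ℂ))
        / ((μ * M : ℝ) : ℂ)) * (X * (X ^ 2 - 1))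
    + C (((2 - (l * (l + 1) : ℤ) / (μ ^ 2 * M ^ 2) : ℝ)) : ℂ) * X ^ 2
    + C (3 + ((2 * Real.sqrt (1 - a ^ 2 / M ^ 2) : ℝ) : ℂ))

section pPolynomial

variable (M a μ : ℝ) (m l : ℤ) (n : ℕ)

theorem eval_pPolynomial (w : ℂ) : (pPolynomial M a μ m l n).eval w = p M a μ m l n w := by
  simp only [pPolynomial, p, eval_add, eval_mul, eval_sub, eval_pow, eval_C, eval_X, eval_one]
  ring

theorem pPolynomial_monic : (pPolynomial M a μ m l n).Monic := by
  unfold pPolynomial; monicity!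

theorem natDegree_pPolynomial : (pPolynomial M a μ m l n).natDegree = 4 := by
  unfold pPolynomial; compute_degree!

end pPolynomial

theorem p_self_eq_limitQuartic {M : ℝ} (hM : M ≠ 0) (μ : ℝ) (m l : ℤ) (n : ℕ) (w : ℂ) :
    p M M μ m l n w = limitQuartic ((m / (μ * M) : ℝ) : ℂ)
      ((6 - (l * (l + 1) : ℤ) / (μ ^ 2 * M ^ 2) : ℝ) : ℂ) w := by
  have hM' : (M : ℂ) ≠ 0 := by exact_mod_cast hM
  simp only [p, limitQuartic, div_self (pow_ne_zero 2 hM), sub_self, Real.sqrt_zero]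
  push_cast
  field_simp
  ring

theorem stmt_5_general (M μ : ℝ) (m l : ℤ) (n : ℕ) (hM : 0 < M)
    (hα₁ : 4 < (m / (μ * M)) ^ 2) (hα₂ : (m / (μ * M)) ^ 2 < 6)
    (hβ₁ : 4 / 100 < 6 - (l * (l + 1) : ℤ) / (μ ^ 2 * M ^ 2))
    (hβ₂ : 6 - (l * (l + 1) : ℤ) / (μ ^ 2 * M ^ 2) < 165 / 100) :
    ∃ a₀ : ℝ, a₀ ∈ Set.Ioo 0 M ∧ ∀ a ∈ Set.Ioo a₀ M,
      ∃ w : ℂ, ‖w‖ < 1 ∧ w.im < 0 ∧ p M a μ m l n w = 0 := by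
  obtain ⟨z₀, hz₀, hz₀im, hq⟩ := exists_root_limitQuartic hα₁ hα₂ hβ₁ hβ₂
  have hU : {w : ℂ | ‖w‖ < 1 ∧ w.im < 0} ∈ 𝓝 z₀ :=
    ((isOpen_lt continuous_norm continuous_const).inter
      (isOpen_lt Complex.continuous_im continuous_const)).mem_nhds ⟨hz₀, hz₀im⟩
  have hlim : Tendsto (fun a => (pPolynomial M a μ m l n).eval z₀) (𝓝[<] M) (𝓝 0) := by
    have hcont : Continuous fun a => p M a μ m l n z₀ := by unfold p; fun_prop
    simp only [eval_pPolynomial]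
    rw [← hq, ← p_self_eq_limitQuartic hM.ne']
    exact hcont.continuousAt.tendsto.mono_left nhdsWithin_le_nhds
  obtain ⟨a₀, ha₀, hsub⟩ := (mem_nhdsLT_iff_exists_mem_Ico_Ioo_subset (half_lt_self hM)).mp
    (eventually_exists_isRoot_mem (pPolynomial_monic M · μ m l n)
      (natDegree_pPolynomial M · μ m l n) hlim hU)
  refine ⟨a₀, ⟨(half_pos hM).trans_le ha₀.1, ha₀.2⟩, fun a ha => ?_⟩
  obtain ⟨w, ⟨hw, hwim⟩, hroot⟩ := hsub ha
  exact ⟨w, hw, hwim, by rwa [← eval_pPolynomial]⟩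

/-- For parameters with `4 < α² < 6` and `4/100 < β < 165/100`, where `α = m/(μM)` and
`β = 6 − l(l+1)/(μ²M²)`, there is `a₀ ∈ (0, M)` such that for all `a ∈ (a₀, M)` the
polynomial `p` has a root in the open lower half-disk. -/
theorem stmt_5 (M μ : ℝ) (m l : ℤ) (n : ℕ) (hM : 0 < M) (hμ : 0 < μ)
    (hm : m ≠ 0) (hl : |m| ≤ l)
    (hα₁ : 4 < (m / (μ * M)) ^ 2) (hα₂ : (m / (μ * M)) ^ 2 < 6)
    (hβ₁ : 4 / 100 < 6 - (l * (l + 1) : ℤ) / (μ ^ 2 * M ^ 2))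
    (hβ₂ : 6 - (l * (l + 1) : ℤ) / (μ ^ 2 * M ^ 2) < 165 / 100) :
    ∃ a₀ : ℝ, a₀ ∈ Set.Ioo 0 M ∧ ∀ a ∈ Set.Ioo a₀ M,
      ∃ w : ℂ, ‖w‖ < 1 ∧ w.im < 0 ∧ p M a μ m l n w = 0 :=
  stmt_5_general M μ m l n hM hα₁ hα₂ hβ₁ hβ₂
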